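/- Let a, b > 0, let W : [0, a] × [0, b] → ℝ be continuous, and let ξ : [0, a] → ℝ and ζ : [0, b] → ℝ be continuously differentiable functions with ξ(0) = ζ(0). Then there exists a unique continuous function φ : [0, a] × [0, b] → ℝ, admitting continuous partial derivatives ∂_u φ, ∂_v φ and a continuous mixed second derivative ∂_u∂_v φ, such that ∂_u∂_v φ(u, v) = W(u, v)·φ(u, v) on [0, a] × [0, b], φ(u, 0) = ξ(u) for all u ∈ [0, a], and φ(0, v) = ζ(v) for all v ∈ [0, b]. (Well-posedness of the characteristic Cauchy (Goursat) problem for the wave equation with potential in null coordinates; this is the 1+1-dimensional reduction of the Goursat problem for the rescaled Regge–Wheeler/Zerilli equation with data on the two null hypersurfaces, the horizon and null infinity.) -/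

import Mathlib

/-! Integrating `∂_u∂_v φ = W φ` over `[0,u] × [0,v]` and using the data on the two
characteristics turns the Goursat problem into the Volterra equation
`φ u v = ξ u + ζ v - ζ 0 + ∫₀ᵘ ∫₀ᵛ W φ`, and conversely every continuous solution of this equation
solves the Goursat problem, by the fundamental theorem of calculus. If `|W| ≤ M`, then for the
sup norm weighted by `exp (-L u)` the Volterra map is Lipschitz with constant `M b / L`, since
`∫₀ᵘ exp (L s) ds ≤ exp (L u) / L`; for `L > M b` the Banach fixed point theorem gives a unique
continuous solution. -/

/-- A solution of the characteristic (Goursat) problem `∂_u∂_v φ = W·φ` on the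
rectangle `[0,a] × [0,b]`, with data `ξ` on the null segment `{v = 0}` and `ζ` on the
null segment `{u = 0}`: `φ` is continuous on the rectangle, admits continuous partial
derivatives `φu = ∂_u φ`, `φv = ∂_v φ` and a continuous mixed second derivative
`φuv = ∂_u ∂_v φ` there, the equation holds on the rectangle, and `φ` restricts to the
data on the two sides. -/
def IsGoursatSolution (a b : ℝ) (W : ℝ → ℝ → ℝ) (ξ ζ : ℝ → ℝ)
    (φ : ℝ → ℝ → ℝ) : Prop :=
  ContinuousOn (fun p : ℝ × ℝ => φ p.1 p.2) (Set.Icc 0 a ×ˢ Set.Icc 0 b) ∧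
  ∃ φu φv φuv : ℝ → ℝ → ℝ,
    ContinuousOn (fun p : ℝ × ℝ => φu p.1 p.2) (Set.Icc 0 a ×ˢ Set.Icc 0 b) ∧
    ContinuousOn (fun p : ℝ × ℝ => φv p.1 p.2) (Set.Icc 0 a ×ˢ Set.Icc 0 b) ∧
    ContinuousOn (fun p : ℝ × ℝ => φuv p.1 p.2) (Set.Icc 0 a ×ˢ Set.Icc 0 b) ∧
    (∀ v ∈ Set.Icc (0:ℝ) b, ∀ u ∈ Set.Icc (0:ℝ) a,
      HasDerivWithinAt (fun u' => φ u' v) (φu u v) (Set.Icc 0 a) u) ∧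
    (∀ u ∈ Set.Icc (0:ℝ) a, ∀ v ∈ Set.Icc (0:ℝ) b,
      HasDerivWithinAt (fun v' => φ u v') (φv u v) (Set.Icc 0 b) v) ∧
    (∀ v ∈ Set.Icc (0:ℝ) b, ∀ u ∈ Set.Icc (0:ℝ) a,
      HasDerivWithinAt (fun u' => φv u' v) (φuv u v) (Set.Icc 0 a) u) ∧
    (∀ u ∈ Set.Icc (0:ℝ) a, ∀ v ∈ Set.Icc (0:ℝ) b, φuv u v = W u v * φ u v) ∧
    (∀ u ∈ Set.Icc (0:ℝ) a, φ u 0 = ξ u) ∧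
    (∀ v ∈ Set.Icc (0:ℝ) b, φ 0 v = ζ v)

open Set Function intervalIntegral Real

theorem uIcc_zero_subset_Icc {u a : ℝ} (hu : u ∈ Icc 0 a) : uIcc 0 u ⊆ Icc 0 a := by
  rw [uIcc_of_le hu.1]
  exact Icc_subset_Icc_right hu.2

theorem exists_continuous_uncurry_extension {X Y : Type*} [TopologicalSpace X]
    [TopologicalSpace Y] [NormalSpace (X × Y)] {s : Set (X × Y)} (hs : IsClosed s)
    {f : X → Y → ℝ} (hf : ContinuousOn (uncurry f) s) :
    ∃ g : X → Y → ℝ, Continuous (uncurry g) ∧ ∀ x y, (x, y) ∈ s → g x y = f x y := by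
  obtain ⟨g, hg⟩ :=
    ContinuousMap.exists_restrict_eq hs ⟨s.domRestrict (uncurry f), hf.domRestrict⟩
  exact ⟨curry g, g.continuous, fun x y hxy => congrArg (· ⟨(x, y), hxy⟩) hg⟩

theorem integral_eq_sub_of_hasDerivWithinAt_Icc {f f' : ℝ → ℝ} {a c x : ℝ} (hx : x ∈ Icc a c)
    (hf : ∀ y ∈ Icc a c, HasDerivWithinAt f (f' y) (Icc a c) y)
    (hf' : ContinuousOn f' (Icc a c)) :
    ∫ y in a..x, f' y = f x - f a := by
  have hsub : Icc a x ⊆ Icc a c := Icc_subset_Icc_right hx.2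
  refine integral_eq_sub_of_hasDerivAt_of_le hx.1
    (fun y hy => (hf y (hsub hy)).continuousWithinAt.mono hsub) (fun y hy => ?_)
    ((hf'.mono hsub).intervalIntegrable_of_Icc hx.1)
  exact (hf y ⟨hy.1.le, hy.2.le.trans hx.2⟩).hasDerivAt (Icc_mem_nhds hy.1 (hy.2.trans_le hx.2))

theorem intervalIntegral_intervalIntegral_swap_of_continuousOn {F : ℝ → ℝ → ℝ} {a b c d : ℝ}
    (hF : ContinuousOn (uncurry F) (uIcc a b ×ˢ uIcc c d)) :
    ∫ x in a..b, ∫ y in c..d, F x y = ∫ y in c..d, ∫ x in a..b, F x y :=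
  MeasureTheory.intervalIntegral_intervalIntegral_swap <|
    (hF.integrableOn_compact (isCompact_uIcc.prod isCompact_uIcc)).mono_set
      (prod_mono uIoc_subset_uIcc uIoc_subset_uIcc)

theorem intervalIntegral_intervalIntegral_congr {F G : ℝ → ℝ → ℝ} {a b c d : ℝ}
    (h : ∀ x ∈ uIcc a b, ∀ y ∈ uIcc c d, F x y = G x y) :
    ∫ x in a..b, ∫ y in c..d, F x y = ∫ x in a..b, ∫ y in c..d, G x y :=
  integral_congr fun x hx => integral_congr fun y hy => h x hx y hy

theorem continuous_intervalIntegral_intervalIntegral {F : ℝ → ℝ → ℝ} (hF : Continuous (uncurry F))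
    (a c : ℝ) : Continuous fun p : ℝ × ℝ => ∫ x in a..p.1, ∫ y in c..p.2, F x y := by
  have hinner : Continuous (uncurry fun (p : ℝ × ℝ) (x : ℝ) => ∫ y in c..p.2, F x y) := by
    fun_prop
  exact continuous_parametric_intervalIntegral_of_continuous hinner continuous_fst

theorem intervalIntegral_intervalIntegral_sub {F G : ℝ → ℝ → ℝ} (hF : Continuous (uncurry F))
    (hG : Continuous (uncurry G)) (a b c d : ℝ) :
    (∫ x in a..b, ∫ y in c..d, F x y) - ∫ x in a..b, ∫ y in c..d, G x y =
      ∫ x in a..b, ∫ y in c..d, (F x y - G x y) := by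
  rw [← integral_sub]
  · refine integral_congr fun x _ => (integral_sub ?_ ?_).symm <;>
      exact Continuous.intervalIntegrable (by fun_prop) _ _
  all_goals exact Continuous.intervalIntegrable (by fun_prop) _ _

theorem integral_exp_mul {L : ℝ} (hL : L ≠ 0) (u : ℝ) :
    ∫ s in (0:ℝ)..u, exp (L * s) = (exp (L * u) - 1) / L := by
  rw [integral_comp_mul_left (fun s => exp s) hL, integral_exp]
  simp [div_eq_inv_mul]

theorem abs_intervalIntegral_intervalIntegral_le_of_abs_le_exp {F : ℝ → ℝ → ℝ} {C L u v : ℝ}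
    (hL : 0 < L) (hu : 0 ≤ u) (hv : 0 ≤ v)
    (hF : ∀ s ∈ Icc 0 u, ∀ t ∈ Icc 0 v, |F s t| ≤ C * exp (L * s)) :
    |∫ s in (0:ℝ)..u, ∫ t in (0:ℝ)..v, F s t| ≤ C * v / L * exp (L * u) := by
  have hC : 0 ≤ C := by
    simpa using (abs_nonneg _).trans (hF 0 ⟨le_rfl, hu⟩ 0 ⟨le_rfl, hv⟩)
  have hinner : ∀ s ∈ Ioc 0 u, ‖∫ t in (0:ℝ)..v, F s t‖ ≤ C * v * exp (L * s) := by
    intro s hs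
    calc ‖∫ t in (0:ℝ)..v, F s t‖ ≤ C * exp (L * s) * |v - 0| :=
          norm_integral_le_of_norm_le_const fun t ht => by
            rw [uIoc_of_le hv] at ht
            exact hF s (Ioc_subset_Icc_self hs) t (Ioc_subset_Icc_self ht)
      _ = C * v * exp (L * s) := by rw [sub_zero, abs_of_nonneg hv]; ring
  calc |∫ s in (0:ℝ)..u, ∫ t in (0:ℝ)..v, F s t|
      ≤ ∫ s in (0:ℝ)..u, C * v * exp (L * s) :=
        norm_integral_le_of_norm_le hu (Filter.Eventually.of_forall hinner)
          (Continuous.intervalIntegrable (by fun_prop) _ _)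
    _ = C * v / L * (exp (L * u) - 1) := by
        rw [integral_const_mul, integral_exp_mul hL.ne']; ring
    _ ≤ C * v / L * exp (L * u) := by
        gcongr
        linarith

def IsVolterraSolution (a b : ℝ) (W D φ : ℝ → ℝ → ℝ) : Prop :=
  ∀ u ∈ Icc (0:ℝ) a, ∀ v ∈ Icc (0:ℝ) b,
    φ u v = D u v + ∫ s in (0:ℝ)..u, ∫ t in (0:ℝ)..v, W s t * φ s t

section Volterra

variable {a b : ℝ} {W D : ℝ → ℝ → ℝ}

theorem isVolterraSolution_congr {W' φ : ℝ → ℝ → ℝ}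
    (hW : ∀ u v, (u, v) ∈ Icc 0 a ×ˢ Icc 0 b → W u v = W' u v) :
    IsVolterraSolution a b W D φ ↔ IsVolterraSolution a b W' D φ := by
  have hint : ∀ u ∈ Icc (0:ℝ) a, ∀ v ∈ Icc (0:ℝ) b,
      ∫ s in (0:ℝ)..u, ∫ t in (0:ℝ)..v, W s t * φ s t =
        ∫ s in (0:ℝ)..u, ∫ t in (0:ℝ)..v, W' s t * φ s t := fun u hu v hv =>
    intervalIntegral_intervalIntegral_congr fun s hs t ht => by
      rw [hW s t ⟨uIcc_zero_subset_Icc hu hs, uIcc_zero_subset_Icc hv ht⟩]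
  exact forall₂_congr fun u hu => forall₂_congr fun v hv => by rw [hint u hu v hv]

section WeightedVolterraMap

variable (ha : 0 ≤ a) (hb : 0 ≤ b)

noncomputable def rectExtend (g : C(Icc (0:ℝ) a × Icc (0:ℝ) b, ℝ)) (u v : ℝ) : ℝ :=
  g (projIcc 0 a ha u, projIcc 0 b hb v)

theorem continuous_rectExtend (g : C(Icc (0:ℝ) a × Icc (0:ℝ) b, ℝ)) :
    Continuous (uncurry (rectExtend ha hb g)) :=
  g.continuous.comp (continuous_projIcc.prodMap continuous_projIcc)

theorem rectExtend_of_mem (g : C(Icc (0:ℝ) a × Icc (0:ℝ) b, ℝ)) {u v : ℝ} (hu : u ∈ Icc 0 a)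
    (hv : v ∈ Icc 0 b) : rectExtend ha hb g u v = g (⟨u, hu⟩, ⟨v, hv⟩) := by
  simp [rectExtend, projIcc_of_mem _ hu, projIcc_of_mem _ hv]

theorem abs_rectExtend_sub_le (g g' : C(Icc (0:ℝ) a × Icc (0:ℝ) b, ℝ)) (u v : ℝ) :
    |rectExtend ha hb g u v - rectExtend ha hb g' u v| ≤ dist g g' := by
  rw [← Real.dist_eq]
  exact ContinuousMap.dist_apply_le_dist _

theorem continuous_mul_exp_mul_rectExtend (hW : Continuous (uncurry W)) (L : ℝ)
    (g : C(Icc (0:ℝ) a × Icc (0:ℝ) b, ℝ)) :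
    Continuous (uncurry fun s t => W s t * (exp (L * s) * rectExtend ha hb g s t)) :=
  hW.mul ((continuous_exp.comp (continuous_const.mul continuous_fst)).mul
    (continuous_rectExtend ha hb g))

/-- The Volterra map `φ ↦ D + ∫∫ W φ` conjugated by the weight `exp (L u)`. -/
noncomputable def weightedVolterraMap (hW : Continuous (uncurry W))
    (hD : ContinuousOn (uncurry D) (Icc 0 a ×ˢ Icc 0 b)) (L : ℝ)
    (g : C(Icc (0:ℝ) a × Icc (0:ℝ) b, ℝ)) : C(Icc (0:ℝ) a × Icc (0:ℝ) b, ℝ) where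
  toFun p := exp (-(L * p.1)) * (D p.1 p.2 +
    ∫ s in (0:ℝ)..p.1, ∫ t in (0:ℝ)..p.2, W s t * (exp (L * s) * rectExtend ha hb g s t))
  continuous_toFun := by
    have hval : Continuous fun p : Icc (0:ℝ) a × Icc (0:ℝ) b => ((p.1 : ℝ), (p.2 : ℝ)) :=
      continuous_subtype_val.prodMap continuous_subtype_val
    have hdata : Continuous fun p : Icc (0:ℝ) a × Icc (0:ℝ) b => D p.1 p.2 :=
      hD.comp_continuous hval fun p => ⟨p.1.2, p.2.2⟩
    have hint : Continuous fun p : Icc (0:ℝ) a × Icc (0:ℝ) b => ∫ s in (0:ℝ)..p.1,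
        ∫ t in (0:ℝ)..p.2, W s t * (exp (L * s) * rectExtend ha hb g s t) :=
      (continuous_intervalIntegral_intervalIntegral
        (continuous_mul_exp_mul_rectExtend ha hb hW L g) 0 0).comp hval
    exact (by fun_prop : Continuous fun p : Icc (0:ℝ) a × Icc (0:ℝ) b => exp (-(L * p.1))).mul
      (hdata.add hint)

variable (hW : Continuous (uncurry W)) (hD : ContinuousOn (uncurry D) (Icc 0 a ×ˢ Icc 0 b))

theorem dist_weightedVolterraMap_le {M L : ℝ} (hL : 0 < L)
    (hM : ∀ u ∈ Icc (0:ℝ) a, ∀ v ∈ Icc (0:ℝ) b, |W u v| ≤ M)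
    (g g' : C(Icc (0:ℝ) a × Icc (0:ℝ) b, ℝ)) :
    dist (weightedVolterraMap ha hb hW hD L g) (weightedVolterraMap ha hb hW hD L g') ≤
      M * b / L * dist g g' := by
  have hM0 : 0 ≤ M := (abs_nonneg _).trans (hM 0 ⟨le_rfl, ha⟩ 0 ⟨le_rfl, hb⟩)
  refine (ContinuousMap.dist_le (by positivity)).2 fun ⟨⟨u, hu⟩, ⟨v, hv⟩⟩ => ?_
  have hI := abs_intervalIntegral_intervalIntegral_le_of_abs_le_exp (C := M * dist g g')
    (F := fun s t => W s t * (exp (L * s) * rectExtend ha hb g s t) -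
      W s t * (exp (L * s) * rectExtend ha hb g' s t)) hL hu.1 hv.1 fun s hs t ht => by
    rw [← mul_sub, ← mul_sub, abs_mul, abs_mul, abs_of_pos (exp_pos _)]
    calc |W s t| * (exp (L * s) * |rectExtend ha hb g s t - rectExtend ha hb g' s t|)
        ≤ M * (exp (L * s) * dist g g') := by
          gcongr
          · exact hM s ⟨hs.1, hs.2.trans hu.2⟩ t ⟨ht.1, ht.2.trans hv.2⟩
          · exact abs_rectExtend_sub_le ha hb g g' s t
      _ = M * dist g g' * exp (L * s) := by ring
  simp only [weightedVolterraMap, ContinuousMap.coe_mk, Real.dist_eq]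
  rw [← mul_sub, add_sub_add_left_eq_sub, intervalIntegral_intervalIntegral_sub
    (continuous_mul_exp_mul_rectExtend ha hb hW L g)
    (continuous_mul_exp_mul_rectExtend ha hb hW L g'), abs_mul, abs_of_pos (exp_pos _)]
  calc exp (-(L * u)) * |∫ s in (0:ℝ)..u, ∫ t in (0:ℝ)..v, _|
      ≤ exp (-(L * u)) * (M * dist g g' * v / L * exp (L * u)) := by gcongr
    _ = M * v / L * dist g g' := by rw [exp_neg]; field_simp
    _ ≤ M * b / L * dist g g' := by gcongr; exact hv.2

theorem exists_contractingWith_weightedVolterraMap :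
    ∃ L K, ContractingWith K (weightedVolterraMap ha hb hW hD L) := by
  obtain ⟨M, hM⟩ := (isCompact_Icc.prod isCompact_Icc).exists_bound_of_continuousOn
    (hW.continuousOn (s := Icc (0:ℝ) a ×ˢ Icc (0:ℝ) b))
  have hM' : ∀ u ∈ Icc (0:ℝ) a, ∀ v ∈ Icc (0:ℝ) b, |W u v| ≤ M := fun u hu v hv =>
    hM (u, v) ⟨hu, hv⟩
  have hM0 : 0 ≤ M := (abs_nonneg _).trans (hM' 0 ⟨le_rfl, ha⟩ 0 ⟨le_rfl, hb⟩)
  refine ⟨M * b + 1, (⟨M * b / (M * b + 1), by positivity⟩ : NNReal), ?_,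
    LipschitzWith.of_dist_le_mul fun g g' => dist_weightedVolterraMap_le ha hb hW hD
      (by positivity) hM' g g'⟩
  exact (div_lt_one (by positivity : (0:ℝ) < M * b + 1)).2 (by linarith)

theorem isVolterraSolution_of_isFixedPt {L : ℝ} {g : C(Icc (0:ℝ) a × Icc (0:ℝ) b, ℝ)}
    (hg : IsFixedPt (weightedVolterraMap ha hb hW hD L) g) :
    IsVolterraSolution a b W D fun u v => exp (L * u) * rectExtend ha hb g u v := by
  intro u hu v hv
  have hp : g (⟨u, hu⟩, ⟨v, hv⟩) = weightedVolterraMap ha hb hW hD L g (⟨u, hu⟩, ⟨v, hv⟩) :=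
    (DFunLike.congr_fun hg _).symm
  dsimp only
  rw [rectExtend_of_mem ha hb g hu hv, hp]
  simp [weightedVolterraMap, ← mul_assoc, ← exp_add]

theorem isFixedPt_of_isVolterraSolution {L : ℝ} {φ : ℝ → ℝ → ℝ}
    (hφ : IsVolterraSolution a b W D φ) {g : C(Icc (0:ℝ) a × Icc (0:ℝ) b, ℝ)}
    (hg : ∀ u (hu : u ∈ Icc 0 a) v (hv : v ∈ Icc 0 b),
      g (⟨u, hu⟩, ⟨v, hv⟩) = exp (-(L * u)) * φ u v) :
    IsFixedPt (weightedVolterraMap ha hb hW hD L) g := by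
  have hunweight : ∀ s ∈ Icc (0:ℝ) a, ∀ t ∈ Icc (0:ℝ) b,
      exp (L * s) * rectExtend ha hb g s t = φ s t := fun s hs t ht => by
    rw [rectExtend_of_mem ha hb g hs ht, hg, ← mul_assoc, ← exp_add, add_neg_cancel, exp_zero,
      one_mul]
  ext ⟨⟨u, hu⟩, ⟨v, hv⟩⟩
  simp only [weightedVolterraMap, ContinuousMap.coe_mk]
  rw [intervalIntegral_intervalIntegral_congr fun s hs t ht => by
    rw [hunweight s (uIcc_zero_subset_Icc hu hs) t (uIcc_zero_subset_Icc hv ht)],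
    ← hφ u hu v hv, hg]

end WeightedVolterraMap

theorem exists_continuousOn_isVolterraSolution (ha : 0 ≤ a) (hb : 0 ≤ b)
    (hW : ContinuousOn (uncurry W) (Icc 0 a ×ˢ Icc 0 b))
    (hD : ContinuousOn (uncurry D) (Icc 0 a ×ˢ Icc 0 b)) :
    ∃ φ : ℝ → ℝ → ℝ, ContinuousOn (uncurry φ) (Icc 0 a ×ˢ Icc 0 b) ∧
      IsVolterraSolution a b W D φ := by
  obtain ⟨W', hW'c, hW'⟩ := exists_continuous_uncurry_extension
    (isClosed_Icc.prod isClosed_Icc) hW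
  obtain ⟨L, K, hK⟩ := exists_contractingWith_weightedVolterraMap ha hb hW'c hD
  refine ⟨_, Continuous.continuousOn ?_, (isVolterraSolution_congr hW').1
    (isVolterraSolution_of_isFixedPt ha hb hW'c hD hK.fixedPoint_isFixedPt)⟩
  exact (continuous_exp.comp (continuous_const.mul continuous_fst)).mul
    (continuous_rectExtend ha hb _)

theorem IsVolterraSolution.unique (ha : 0 ≤ a) (hb : 0 ≤ b)
    (hW : ContinuousOn (uncurry W) (Icc 0 a ×ˢ Icc 0 b))
    (hD : ContinuousOn (uncurry D) (Icc 0 a ×ˢ Icc 0 b)) {φ ψ : ℝ → ℝ → ℝ}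
    (hφc : ContinuousOn (uncurry φ) (Icc 0 a ×ˢ Icc 0 b))
    (hψc : ContinuousOn (uncurry ψ) (Icc 0 a ×ˢ Icc 0 b))
    (hφ : IsVolterraSolution a b W D φ) (hψ : IsVolterraSolution a b W D ψ) :
    ∀ u ∈ Icc (0:ℝ) a, ∀ v ∈ Icc (0:ℝ) b, φ u v = ψ u v := by
  obtain ⟨W', hW'c, hW'⟩ := exists_continuous_uncurry_extension
    (isClosed_Icc.prod isClosed_Icc) hW
  rw [← isVolterraSolution_congr hW'] at hφ hψ
  obtain ⟨L, K, hK⟩ := exists_contractingWith_weightedVolterraMap ha hb hW'c hD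
  have hweight : ∀ χ : ℝ → ℝ → ℝ, ContinuousOn (uncurry χ) (Icc 0 a ×ˢ Icc 0 b) →
      Continuous fun p : Icc (0:ℝ) a × Icc (0:ℝ) b => exp (-(L * p.1)) * χ p.1 p.2 :=
    fun χ hχ => (by fun_prop : Continuous fun p : Icc (0:ℝ) a × Icc (0:ℝ) b =>
      exp (-(L * p.1))).mul (hχ.comp_continuous (f := fun p : Icc (0:ℝ) a × Icc (0:ℝ) b =>
        ((p.1 : ℝ), (p.2 : ℝ))) (by fun_prop) fun p => ⟨p.1.2, p.2.2⟩)
  have hfix := hK.fixedPoint_unique'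
    (isFixedPt_of_isVolterraSolution ha hb hW'c hD hφ (g := ⟨_, hweight φ hφc⟩) fun _ _ _ _ => rfl)
    (isFixedPt_of_isVolterraSolution ha hb hW'c hD hψ (g := ⟨_, hweight ψ hψc⟩) fun _ _ _ _ => rfl)
  intro u hu v hv
  exact mul_left_cancel₀ (exp_ne_zero _) (DFunLike.congr_fun hfix (⟨u, hu⟩, ⟨v, hv⟩))

end Volterra

section Goursat

variable {a b : ℝ} {W φ : ℝ → ℝ → ℝ} {ξ ζ : ℝ → ℝ}

theorem IsGoursatSolution.isVolterraSolution (hφ : IsGoursatSolution a b W ξ ζ φ) :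
    IsVolterraSolution a b W (fun u v => ξ u + ζ v - ζ 0) φ := by
  obtain ⟨-, -, φv, φuv, -, hφv_c, hφuv_c, -, hφv, hφuv, heq, hξ, hζ⟩ := hφ
  intro u hu v hv
  have h0a : (0:ℝ) ∈ Icc 0 a := ⟨le_rfl, hu.1.trans hu.2⟩
  have h0b : (0:ℝ) ∈ Icc 0 b := ⟨le_rfl, hv.1.trans hv.2⟩
  have hslice : ∀ x ∈ Icc (0:ℝ) a, ContinuousOn (φv x) (Icc 0 b) := fun x hx =>
    hφv_c.uncurry_left x hx
  have hint_v : ∀ x ∈ Icc (0:ℝ) a, ∫ t in (0:ℝ)..v, φv x t = φ x v - φ x 0 := fun x hx =>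
    integral_eq_sub_of_hasDerivWithinAt_Icc hv (hφv x hx) (hslice x hx)
  have hint_u : ∀ t ∈ Icc (0:ℝ) b, φv u t - φv 0 t = ∫ s in (0:ℝ)..u, W s t * φ s t :=
    fun t ht => by
      rw [← integral_eq_sub_of_hasDerivWithinAt_Icc hu (hφuv t ht) (hφuv_c.uncurry_right t ht)]
      exact integral_congr fun s hs => heq s (uIcc_zero_subset_Icc hu hs) t ht
  have hintegrable : ∀ x ∈ Icc (0:ℝ) a, IntervalIntegrable (φv x) MeasureTheory.volume 0 v :=
    fun x hx => ((hslice x hx).mono (uIcc_zero_subset_Icc hv)).intervalIntegrable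
  have hWφ : ContinuousOn (uncurry fun s t => W s t * φ s t) (uIcc 0 u ×ˢ uIcc 0 v) :=
    (hφuv_c.mono (prod_mono (uIcc_zero_subset_Icc hu) (uIcc_zero_subset_Icc hv))).congr
      fun p hp => (heq p.1 (uIcc_zero_subset_Icc hu hp.1) p.2 (uIcc_zero_subset_Icc hv hp.2)).symm
  calc φ u v = ξ u + ζ v - ζ 0 + ((∫ t in (0:ℝ)..v, φv u t) - ∫ t in (0:ℝ)..v, φv 0 t) := by
        rw [hint_v u hu, hint_v 0 h0a, hξ u hu, hζ v hv, hζ 0 h0b]; ring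
    _ = ξ u + ζ v - ζ 0 + ∫ t in (0:ℝ)..v, ∫ s in (0:ℝ)..u, W s t * φ s t := by
        rw [← integral_sub (hintegrable u hu) (hintegrable 0 h0a)]
        exact congrArg _ (integral_congr fun t ht => hint_u t (uIcc_zero_subset_Icc hv ht))
    _ = ξ u + ζ v - ζ 0 + ∫ s in (0:ℝ)..u, ∫ t in (0:ℝ)..v, W s t * φ s t := by
        rw [intervalIntegral_intervalIntegral_swap_of_continuousOn hWφ]

theorem IsVolterraSolution.isGoursatSolution (ha : 0 < a) (hb : 0 < b)
    (hW : ContinuousOn (uncurry W) (Icc 0 a ×ˢ Icc 0 b)) (hξ : ContDiffOn ℝ 1 ξ (Icc 0 a))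
    (hζ : ContDiffOn ℝ 1 ζ (Icc 0 b)) (hcorner : ξ 0 = ζ 0)
    (hφc : ContinuousOn (uncurry φ) (Icc 0 a ×ˢ Icc 0 b))
    (hφ : IsVolterraSolution a b W (fun u v => ξ u + ζ v - ζ 0) φ) :
    IsGoursatSolution a b W ξ ζ φ := by
  obtain ⟨F, hFc, hF⟩ := exists_continuous_uncurry_extension
    (isClosed_Icc.prod isClosed_Icc) (f := fun s t => W s t * φ s t) (hW.mul hφc)
  have hrep : ∀ u ∈ Icc (0:ℝ) a, ∀ v ∈ Icc (0:ℝ) b,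
      φ u v = ξ u + ζ v - ζ 0 + ∫ s in (0:ℝ)..u, ∫ t in (0:ℝ)..v, F s t := fun u hu v hv => by
    rw [hφ u hu v hv, intervalIntegral_intervalIntegral_congr fun s hs t ht =>
      (hF s t ⟨uIcc_zero_subset_Icc hu hs, uIcc_zero_subset_Icc hv ht⟩).symm]
  have hξ' : ∀ u ∈ Icc (0:ℝ) a, HasDerivWithinAt ξ (derivWithin ξ (Icc 0 a) u) (Icc 0 a) u :=
    fun u hu => (hξ.differentiableOn one_ne_zero u hu).hasDerivWithinAt
  have hζ' : ∀ v ∈ Icc (0:ℝ) b, HasDerivWithinAt ζ (derivWithin ζ (Icc 0 b) v) (Icc 0 b) v :=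
    fun v hv => (hζ.differentiableOn one_ne_zero v hv).hasDerivWithinAt
  refine ⟨hφc, fun u v => derivWithin ξ (Icc 0 a) u + ∫ t in (0:ℝ)..v, F u t,
    fun u v => derivWithin ζ (Icc 0 b) v + ∫ s in (0:ℝ)..u, F s v, F, ?_, ?_, hFc.continuousOn,
    ?_, ?_, ?_, fun u hu v hv => hF u v ⟨hu, hv⟩, ?_, ?_⟩
  · exact ((hξ.continuousOn_derivWithin (uniqueDiffOn_Icc ha) le_rfl).comp continuousOn_fst
      fun p hp => hp.1).add (by fun_prop : Continuous fun p : ℝ × ℝ =>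
        ∫ t in (0:ℝ)..p.2, F p.1 t).continuousOn
  · exact ((hζ.continuousOn_derivWithin (uniqueDiffOn_Icc hb) le_rfl).comp continuousOn_snd
      fun p hp => hp.2).add (by fun_prop : Continuous fun p : ℝ × ℝ =>
        ∫ s in (0:ℝ)..p.1, F s p.2).continuousOn
  · intro v hv u hu
    have hG : Continuous fun s => ∫ t in (0:ℝ)..v, F s t := by fun_prop
    have hint := (hG.integral_hasStrictDerivAt 0 u).hasDerivAt.hasDerivWithinAt (s := Icc 0 a)
    refine (((hξ' u hu).add_const (ζ v - ζ 0)).add hint).congr (fun x hx => ?_) ?_ <;>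
      · rw [hrep _ ‹_› v hv, Pi.add_apply]; ring
  · intro u hu v hv
    have hG : Continuous fun t => ∫ s in (0:ℝ)..u, F s t := by fun_prop
    have hint := (hG.integral_hasStrictDerivAt 0 v).hasDerivAt.hasDerivWithinAt (s := Icc 0 b)
    refine ((((hζ' v hv).const_add (ξ u)).sub_const (ζ 0)).add hint).congr (fun y hy => ?_) ?_ <;>
      · rw [hrep u hu _ ‹_›,
          intervalIntegral_intervalIntegral_swap_of_continuousOn hFc.continuousOn, Pi.add_apply]
  · intro v hv u hu
    exact (((by fun_prop : Continuous fun s => F s v).integral_hasStrictDerivAt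
      0 u).hasDerivAt.hasDerivWithinAt.const_add _)
  · intro u hu
    simp [hrep u hu 0 ⟨le_rfl, hb.le⟩]
  · intro v hv
    simp [hrep 0 ⟨le_rfl, ha.le⟩ v hv, hcorner]

end Goursat

/-- well-posedness of the characteristic Cauchy (Goursat) problem
`∂_u∂_v φ = W·φ` on `[0,a] × [0,b]` with continuous `W`, `C¹` data `ξ`, `ζ` agreeing at
the corner: a solution exists and any two solutions agree on the rectangle. -/
theorem goursat_problem_well_posed (a b : ℝ) (ha : 0 < a) (hb : 0 < b)
    (W : ℝ → ℝ → ℝ)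
    (hW : ContinuousOn (fun p : ℝ × ℝ => W p.1 p.2) (Set.Icc 0 a ×ˢ Set.Icc 0 b))
    (ξ ζ : ℝ → ℝ)
    (hξ : ContDiffOn ℝ 1 ξ (Set.Icc 0 a)) (hζ : ContDiffOn ℝ 1 ζ (Set.Icc 0 b))
    (hcorner : ξ 0 = ζ 0) :
    (∃ φ : ℝ → ℝ → ℝ, IsGoursatSolution a b W ξ ζ φ) ∧
    (∀ φ φ' : ℝ → ℝ → ℝ, IsGoursatSolution a b W ξ ζ φ →
      IsGoursatSolution a b W ξ ζ φ' →
      ∀ u ∈ Set.Icc (0:ℝ) a, ∀ v ∈ Set.Icc (0:ℝ) b, φ u v = φ' u v) := by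
  have hD : ContinuousOn (uncurry fun u v => ξ u + ζ v - ζ 0) (Icc 0 a ×ˢ Icc 0 b) :=
    ((hξ.continuousOn.comp continuousOn_fst fun p hp => hp.1).add
      (hζ.continuousOn.comp continuousOn_snd fun p hp => hp.2)).sub continuousOn_const
  obtain ⟨φ, hφc, hφ⟩ := exists_continuousOn_isVolterraSolution ha.le hb.le hW hD
  refine ⟨⟨φ, hφ.isGoursatSolution ha hb hW hξ hζ hcorner hφc⟩, fun φ φ' h h' u hu v hv => ?_⟩
  exact IsVolterraSolution.unique ha.le hb.le hW hD h.1 h'.1 h.isVolterraSolution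
    h'.isVolterraSolution u hu v hv
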